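/- For every admissible solution A of a PAP 𝒫 = ⟨H, P, O, γ⟩, there exists a stable model M of the translated program lpw(𝒫) with M ∩ H = A and whose total weak-constraint penalty equals sum_γ(A). -/
import Mathlib


/-- A propositional logic-program rule `head :- pos, not neg`.
`head = none` represents a strong constraint (rule with empty head). -/
structure LPRule where
  head : Option ℕ
  pos : Finset ℕ
  neg : Finset ℕ
deriving DecidableEq

namespace LP

/-- Truth of a rule head w.r.t. an interpretation; an empty head is never true. -/
def headTrue (I : Set ℕ) : Option ℕ → Prop
  | none => False
  | some a => a ∈ I

/-- The body of a rule is true w.r.t. `I`. -/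
def bodyTrue (I : Set ℕ) (r : LPRule) : Prop :=
  (∀ b ∈ r.pos, b ∈ I) ∧ (∀ b ∈ r.neg, b ∉ I)

/-- `I` satisfies rule `r`. -/
def satRule (I : Set ℕ) (r : LPRule) : Prop := bodyTrue I r → headTrue I r.head

/-- `I` is a model of the program `P`. -/
def isModel (P : Set LPRule) (I : Set ℕ) : Prop := ∀ r ∈ P, satRule I r

/-- A positive (negation-free) program. -/
def isPositive (P : Set LPRule) : Prop := ∀ r ∈ P, r.neg = ∅

/-- A constraint-free program (no rules with empty head). -/
def constraintFree (P : Set LPRule) : Prop := ∀ r ∈ P, r.head ≠ none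

/-- The Gelfond-Lifschitz reduct `P^I`. -/
def reduct (P : Set LPRule) (I : Set ℕ) : Set LPRule :=
  (fun r => LPRule.mk r.head r.pos ∅) '' {r ∈ P | ∀ b ∈ r.neg, b ∉ I}

/-- `M` is the least model of `P`. -/
def isLeastModel (P : Set LPRule) (M : Set ℕ) : Prop :=
  isModel P M ∧ ∀ M', isModel P M' → M ⊆ M'

/-- `M` is a stable model of `P`: it is the least model of the reduct `P^M`. -/
def isStable (P : Set LPRule) (M : Set ℕ) : Prop := isLeastModel (reduct P M) M

/-- `facts S` is the set of facts `{p :- | p ∈ S}`. -/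
def facts (S : Set ℕ) : Set LPRule := (fun p => LPRule.mk (some p) ∅ ∅) '' S

/-- The atoms occurring in a rule. -/
def ruleAtoms (r : LPRule) : Set ℕ := {a | r.head = some a} ∪ ↑r.pos ∪ ↑r.neg

/-- The Herbrand base of a program: all atoms occurring in it. -/
def atoms (P : Set LPRule) : Set ℕ := ⋃ r ∈ P, ruleAtoms r

/-- `p` depends on `q`: some rule has head `p` and `q` in its body. -/
def dependsOn (P : Set LPRule) (p q : ℕ) : Prop :=
  ∃ r ∈ P, r.head = some p ∧ (q ∈ r.pos ∨ q ∈ r.neg)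

/-- `P` is stratified: no rule with head `p` and `not q` in the body where
`q` transitively depends on `p`. -/
def stratified (P : Set LPRule) : Prop :=
  ∀ r ∈ P, ∀ p, r.head = some p → ∀ q ∈ r.neg, ¬ Relation.TransGen (dependsOn P) q p

/-- Hypotheses `H` do not occur in rule heads of `P`. -/
def hypFree (P : Set LPRule) (H : Finset ℕ) : Prop :=
  ∀ r ∈ P, ∀ h ∈ H, r.head ≠ some h

/-- `S` is an admissible solution: `S ⊆ H` and some stable model of
`P ∪ facts S` makes all observations true. -/
def admissible (P : Set LPRule) (H obsP obsN : Finset ℕ) (S : Set ℕ) : Prop :=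
  S ⊆ ↑H ∧ ∃ M, isStable (P ∪ facts S) M ∧ (∀ o ∈ obsP, o ∈ M) ∧ (∀ o ∈ obsN, o ∉ M)

/-- `sum_γ`: total penalty of the hypotheses of `H` belonging to `S`. -/
noncomputable def cost (γ : ℕ → NNReal) (H : Finset ℕ) (S : Set ℕ) : NNReal :=
  ∑ h ∈ H, S.indicator γ h

/-- `S` is an optimal solution: admissible with minimal total penalty. -/
def optimal (P : Set LPRule) (H obsP obsN : Finset ℕ) (γ : ℕ → NNReal) (S : Set ℕ) : Prop :=
  admissible P H obsP obsN S ∧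
  ∀ S', admissible P H obsP obsN S' → cost γ H S ≤ cost γ H S'

end LP

namespace LP

/-- `P2` potentially uses `P1`: no head atom of `P2` occurs in `P1`. -/
def potentiallyUses (P2 P1 : Set LPRule) : Prop :=
  ∀ r ∈ P2, ∀ a, r.head = some a → a ∉ atoms P1

/-- The translated program `lpw(𝒫)`: the original program `P`, the guessing rules
`h :- sol h`, `sol h :- not nsol h`, `nsol h :- not sol h` for each hypothesis `h ∈ H`,
and the strong constraints `:- not a` (resp. `:- a`) for positive (resp. negative)
observations. -/
def lpw (P : Set LPRule) (H obsP obsN : Finset ℕ) (sol nsol : ℕ → ℕ) : Set LPRule :=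
  P ∪ (⋃ h ∈ (↑H : Set ℕ),
        {LPRule.mk (some h) {sol h} ∅,
         LPRule.mk (some (sol h)) ∅ {nsol h},
         LPRule.mk (some (nsol h)) ∅ {sol h}})
    ∪ ((fun a => LPRule.mk none ∅ {a}) '' ↑obsP)
    ∪ ((fun a => LPRule.mk none {a} ∅) '' ↑obsN)

/-- The atoms `sol h` and `nsol h` are pairwise distinct fresh atoms not occurring
in `P`, `H`, or among the observations. -/
def freshAtoms (P : Set LPRule) (H obsP obsN : Finset ℕ) (sol nsol : ℕ → ℕ) : Prop :=
  Function.Injective sol ∧ Function.Injective nsol ∧ (∀ h h', sol h ≠ nsol h') ∧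
  ∀ h ∈ H, sol h ∉ atoms P ∪ ↑H ∪ ↑obsP ∪ ↑obsN ∧
           nsol h ∉ atoms P ∪ ↑H ∪ ↑obsP ∪ ↑obsN

/-- The total weak-constraint penalty of a model `M`: the weak constraint `:~ h [γ(h)]`
is violated by `M` iff `h ∈ M`, so the penalty is the sum of `γ(h)` over `h ∈ H ∩ M`. -/
noncomputable def penalty (γ : ℕ → NNReal) (H : Finset ℕ) (M : Set ℕ) : NNReal :=
  cost γ H M

/-- `M` is a best model of the translated program: a stable model (which in particular
satisfies all strong constraints) minimizing the total weight of violated weak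
constraints. -/
def isBest (P : Set LPRule) (H obsP obsN : Finset ℕ) (γ : ℕ → NNReal)
    (sol nsol : ℕ → ℕ) (M : Set ℕ) : Prop :=
  isStable (lpw P H obsP obsN sol nsol) M ∧
  ∀ M', isStable (lpw P H obsP obsN sol nsol) M' → penalty γ H M ≤ penalty γ H M'

end LP

namespace LP

lemma headTrue_mono {I J : Set ℕ} (h : I ⊆ J) :
    ∀ {o : Option ℕ}, headTrue I o → headTrue J o
  | none, ht => ht.elim
  | some _, ht => h ht

lemma head_mem_atoms {P : Set LPRule} {r : LPRule} (hr : r ∈ P) {a : ℕ}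
    (ha : r.head = some a) : a ∈ atoms P := Set.mem_biUnion hr (Or.inl (Or.inl ha))

lemma pos_mem_atoms {P : Set LPRule} {r : LPRule} (hr : r ∈ P) {a : ℕ}
    (ha : a ∈ r.pos) : a ∈ atoms P := Set.mem_biUnion hr (Or.inl (Or.inr ha))

lemma neg_mem_atoms {P : Set LPRule} {r : LPRule} (hr : r ∈ P) {a : ℕ}
    (ha : a ∈ r.neg) : a ∈ atoms P := Set.mem_biUnion hr (Or.inr ha)

end LP

/-- every admissible solution `A` of `𝒫` comes from a stable model
`M` of `lpw(𝒫)` with `M ∩ H = A` whose weak-constraint penalty equals `sum_γ(A)`. -/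
theorem lpw_admissible_to_stable (P : Set LPRule) (hFin : P.Finite)
    (H obsP obsN : Finset ℕ) (γ : ℕ → NNReal) (sol nsol : ℕ → ℕ)
    (hHyp : LP.hypFree P H) (hFresh : LP.freshAtoms P H obsP obsN sol nsol)
    (A : Set ℕ) (hA : LP.admissible P H obsP obsN A) :
    ∃ M, LP.isStable (LP.lpw P H obsP obsN sol nsol) M ∧ M ∩ ↑H = A ∧
      LP.penalty γ H M = LP.cost γ H A := by
  classical
  obtain ⟨hAH, M₀, ⟨hmod, hleast⟩, hobsP, hobsN⟩ := hA
  obtain ⟨hsInj, hnInj, hsn, hfresh⟩ := hFresh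
  -- unpack freshness
  have hfr : ∀ h ∈ H, (sol h ∉ LP.atoms P ∧ sol h ∉ (H : Set ℕ) ∧ sol h ∉ (obsP : Set ℕ) ∧
      sol h ∉ (obsN : Set ℕ)) ∧ (nsol h ∉ LP.atoms P ∧ nsol h ∉ (H : Set ℕ) ∧
      nsol h ∉ (obsP : Set ℕ) ∧ nsol h ∉ (obsN : Set ℕ)) := by
    intro h hh
    have := hfresh h hh
    simp only [Set.mem_union, not_or, Finset.mem_coe] at this
    simp only [Finset.mem_coe]
    tauto
  -- A ⊆ M₀
  have hAM₀ : A ⊆ M₀ := by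
    intro p hp
    have hrule : (LPRule.mk (some p) ∅ ∅) ∈ LP.reduct (P ∪ LP.facts A) M₀ :=
      ⟨LPRule.mk (some p) ∅ ∅, ⟨Or.inr ⟨p, hp, rfl⟩,
        fun b hb => absurd hb (Finset.notMem_empty b)⟩, rfl⟩
    exact hmod _ hrule ⟨fun b hb => absurd hb (Finset.notMem_empty b),
      fun b hb => absurd hb (Finset.notMem_empty b)⟩
  -- M₀ is contained in heads of P together with A
  have hM₀sub : M₀ ⊆ {a | ∃ r ∈ P, r.head = some a} ∪ A := by
    have hT : LP.isModel (LP.reduct (P ∪ LP.facts A) M₀)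
        (M₀ ∩ ({a | ∃ r ∈ P, r.head = some a} ∪ A)) := by
      rintro r ⟨r', ⟨hr', hneg⟩, rfl⟩ hbody
      have hbody₀ : LP.bodyTrue M₀ (LPRule.mk r'.head r'.pos ∅) :=
        ⟨fun b hb => (hbody.1 b hb).1, fun b hb => absurd hb (Finset.notMem_empty b)⟩
      have hhead := hmod _ ⟨r', ⟨hr', hneg⟩, rfl⟩ hbody₀
      show LP.headTrue _ r'.head
      cases hh : r'.head with
      | none => rw [hh] at hhead; exact hhead.elim
      | some a =>
        rw [hh] at hhead
        refine ⟨hhead, ?_⟩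
        rcases hr' with hP | ⟨p, hp, rfl⟩
        · exact Or.inl ⟨r', hP, hh⟩
        · obtain rfl : p = a := by simpa using hh
          exact Or.inr hp
    exact fun x hx => (hleast _ hT hx).2
  have hM₀atoms : M₀ ⊆ LP.atoms P ∪ (H : Set ℕ) := fun x hx =>
    (hM₀sub hx).imp (fun ⟨r, hr, hhd⟩ => LP.head_mem_atoms hr hhd) (fun h => hAH h)
  have hMH₀ : ∀ h : ℕ, h ∈ M₀ → h ∈ (H : Set ℕ) → h ∈ A := by
    intro h hM hH
    refine (hM₀sub hM).resolve_left ?_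
    rintro ⟨r, hr, hhd⟩
    exact hHyp r hr h (Finset.mem_coe.mp hH) hhd
  have hsolM₀ : ∀ h ∈ H, sol h ∉ M₀ := by
    intro h hh hx
    rcases hM₀atoms hx with h1 | h1
    · exact (hfr h hh).1.1 h1
    · exact (hfr h hh).1.2.1 h1
  have hnsolM₀ : ∀ h ∈ H, nsol h ∉ M₀ := by
    intro h hh hx
    rcases hM₀atoms hx with h1 | h1
    · exact (hfr h hh).2.1 h1
    · exact (hfr h hh).2.2.1 h1
  set M : Set ℕ := M₀ ∪ (sol '' A) ∪ (nsol '' ((H : Set ℕ) \ A)) with hMdef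
  have hM₀M : M₀ ⊆ M := fun x hx => Or.inl (Or.inl hx)
  -- membership characterizations
  have hMsol : ∀ h ∈ H, (sol h ∈ M ↔ h ∈ A) := by
    intro h hh
    constructor
    · rintro ((hx | ⟨h', hh', heq⟩) | ⟨h', hh', heq⟩)
      · exact absurd hx (hsolM₀ h hh)
      · exact hsInj heq ▸ hh'
      · exact absurd heq.symm (hsn h h')
    · intro hA'; exact Or.inl (Or.inr ⟨h, hA', rfl⟩)
  have hMnsol : ∀ h ∈ H, (nsol h ∈ M ↔ h ∉ A) := by
    intro h hh
    constructor
    · rintro ((hx | ⟨h', hh', heq⟩) | ⟨h', hh', heq⟩)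
      · exact absurd hx (hnsolM₀ h hh)
      · exact absurd heq (hsn h' h)
      · exact hnInj heq ▸ hh'.2
    · intro hA'
      exact Or.inr ⟨h, ⟨Finset.mem_coe.mpr hh, hA'⟩, rfl⟩
  have hMatoms : ∀ a ∈ LP.atoms P, (a ∈ M ↔ a ∈ M₀) := by
    intro a ha
    constructor
    · rintro ((hx | ⟨h', hh', heq⟩) | ⟨h', hh', heq⟩)
      · exact hx
      · exact absurd (heq ▸ ha) (hfr h' (Finset.mem_coe.mp (hAH hh'))).1.1
      · exact absurd (heq ▸ ha) (hfr h' (Finset.mem_coe.mp hh'.1)).2.1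
    · exact fun hx => hM₀M hx
  have hMA : ∀ a ∈ (H : Set ℕ), (a ∈ M ↔ a ∈ A) := by
    intro a ha
    constructor
    · rintro ((hx | ⟨h', hh', heq⟩) | ⟨h', hh', heq⟩)
      · exact hMH₀ a hx ha
      · exact absurd (heq ▸ ha) (hfr h' (Finset.mem_coe.mp (hAH hh'))).1.2.1
      · exact absurd (heq ▸ ha) (hfr h' (Finset.mem_coe.mp hh'.1)).2.2.1
    · exact fun hx => hM₀M (hAM₀ hx)
  have hMnotN : ∀ a ∈ obsN, a ∉ M := by
    intro a ha
    rintro ((hx | ⟨h', hh', heq⟩) | ⟨h', hh', heq⟩)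
    · exact hobsN a ha hx
    · exact (hfr h' (Finset.mem_coe.mp (hAH hh'))).1.2.2.2 (heq ▸ Finset.mem_coe.mpr ha)
    · exact (hfr h' (Finset.mem_coe.mp hh'.1)).2.2.2.2 (heq ▸ Finset.mem_coe.mpr ha)
  -- M ∩ H = A
  have hMHA : M ∩ ↑H = A := by
    ext a
    constructor
    · rintro ⟨haM, haH⟩; exact (hMA a haH).mp haM
    · intro haA; exact ⟨hM₀M (hAM₀ haA), hAH haA⟩
  -- penalty
  have hpen : LP.penalty γ H M = LP.cost γ H A := by
    unfold LP.penalty LP.cost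
    refine Finset.sum_congr rfl fun h hh => ?_
    have hiff := hMA h (Finset.mem_coe.mpr hh)
    by_cases hx : h ∈ A
    · rw [Set.indicator_of_mem (hiff.mpr hx), Set.indicator_of_mem hx]
    · rw [Set.indicator_of_notMem (fun c => hx (hiff.mp c)), Set.indicator_of_notMem hx]
  -- model part
  have hModel : LP.isModel (LP.reduct (LP.lpw P H obsP obsN sol nsol) M) M := by
    rintro r ⟨r', ⟨hr', hneg⟩, rfl⟩ hbody
    rcases hr' with ((hP | hU) | hoP) | hoN
    · -- original rule
      have hneg₀ : ∀ b ∈ r'.neg, b ∉ M₀ := fun b hb hbM₀ => hneg b hb (hM₀M hbM₀)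
      have hred : LPRule.mk r'.head r'.pos ∅ ∈ LP.reduct (P ∪ LP.facts A) M₀ :=
        ⟨r', ⟨Or.inl hP, hneg₀⟩, rfl⟩
      have hbody₀ : LP.bodyTrue M₀ (LPRule.mk r'.head r'.pos ∅) := by
        refine ⟨fun b hb => ?_, fun b hb => absurd hb (Finset.notMem_empty b)⟩
        exact (hMatoms b (LP.pos_mem_atoms hP hb)).mp (hbody.1 b hb)
      exact LP.headTrue_mono hM₀M (hmod _ hred hbody₀)
    · -- guessing rules
      simp only [Set.mem_iUnion, Set.mem_insert_iff, Set.mem_singleton_iff,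
        Finset.mem_coe, exists_prop] at hU
      obtain ⟨h, hh, hc⟩ := hU
      rcases hc with rfl | rfl | rfl
      · -- h :- sol h
        have : sol h ∈ M := hbody.1 (sol h) (Finset.mem_singleton_self _)
        exact hM₀M (hAM₀ ((hMsol h hh).mp this))
      · -- sol h :- not nsol h
        have hn : nsol h ∉ M := hneg (nsol h) (Finset.mem_singleton_self _)
        have : h ∈ A := by
          by_contra hc
          exact hn ((hMnsol h hh).mpr hc)
        exact (hMsol h hh).mpr this
      · -- nsol h :- not sol h
        have hn : sol h ∉ M := hneg (sol h) (Finset.mem_singleton_self _)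
        exact (hMnsol h hh).mpr (fun hc => hn ((hMsol h hh).mpr hc))
    · -- positive observation constraints: not in reduct
      obtain ⟨a, ha, rfl⟩ := hoP
      exact absurd (hM₀M (hobsP a (Finset.mem_coe.mp ha)))
        (hneg a (Finset.mem_singleton_self _))
    · -- negative observation constraints
      obtain ⟨a, ha, rfl⟩ := hoN
      exact absurd (hbody.1 a (Finset.mem_singleton_self _))
        (hMnotN a (Finset.mem_coe.mp ha))
  -- leastness
  have hLeast : ∀ M', LP.isModel (LP.reduct (LP.lpw P H obsP obsN sol nsol) M) M' →
      M ⊆ M' := by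
    intro M' hM'
    have hguess : ∀ h ∈ H, ∀ r ∈ ({LPRule.mk (some h) {sol h} ∅,
        LPRule.mk (some (sol h)) ∅ {nsol h},
        LPRule.mk (some (nsol h)) ∅ {sol h}} : Set LPRule),
        r ∈ LP.lpw P H obsP obsN sol nsol := by
      intro h hh r hr
      exact Or.inl (Or.inl (Or.inr (Set.mem_biUnion (Finset.mem_coe.mpr hh) hr)))
    have hsolM' : ∀ h ∈ A, sol h ∈ M' := by
      intro h hhA
      have hh : h ∈ H := Finset.mem_coe.mp (hAH hhA)
      have hrule : LPRule.mk (some (sol h)) ∅ ∅ ∈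
          LP.reduct (LP.lpw P H obsP obsN sol nsol) M := by
        refine ⟨LPRule.mk (some (sol h)) ∅ {nsol h},
          ⟨hguess h hh _ (Or.inr (Or.inl rfl)), ?_⟩, rfl⟩
        intro b hb hbM
        rw [Finset.mem_singleton] at hb
        subst hb
        exact (hMnsol h hh).mp hbM hhA
      exact hM' _ hrule ⟨fun b hb => absurd hb (Finset.notMem_empty b),
        fun b hb => absurd hb (Finset.notMem_empty b)⟩
    have hnsolM' : ∀ h ∈ (H : Set ℕ), h ∉ A → nsol h ∈ M' := by
      intro h hhH hhA
      have hh : h ∈ H := Finset.mem_coe.mp hhH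
      have hrule : LPRule.mk (some (nsol h)) ∅ ∅ ∈
          LP.reduct (LP.lpw P H obsP obsN sol nsol) M := by
        refine ⟨LPRule.mk (some (nsol h)) ∅ {sol h},
          ⟨hguess h hh _ (Or.inr (Or.inr rfl)), ?_⟩, rfl⟩
        intro b hb hbM
        rw [Finset.mem_singleton] at hb
        subst hb
        exact hhA ((hMsol h hh).mp hbM)
      exact hM' _ hrule ⟨fun b hb => absurd hb (Finset.notMem_empty b),
        fun b hb => absurd hb (Finset.notMem_empty b)⟩
    have hAM' : A ⊆ M' := by
      intro h hhA
      have hh : h ∈ H := Finset.mem_coe.mp (hAH hhA)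
      have hrule : LPRule.mk (some h) {sol h} ∅ ∈
          LP.reduct (LP.lpw P H obsP obsN sol nsol) M :=
        ⟨LPRule.mk (some h) {sol h} ∅, ⟨hguess h hh _ (Or.inl rfl),
          fun b hb => absurd hb (Finset.notMem_empty b)⟩, rfl⟩
      refine hM' _ hrule ⟨fun b hb => ?_, fun b hb => absurd hb (Finset.notMem_empty b)⟩
      rw [Finset.mem_singleton] at hb
      subst hb
      exact hsolM' h hhA
    have hM'mod : LP.isModel (LP.reduct (P ∪ LP.facts A) M₀) M' := by
      rintro s ⟨r', ⟨hr', hneg₀⟩, rfl⟩ hbody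
      rcases hr' with hP | ⟨p, hp, rfl⟩
      · have hneg : ∀ b ∈ r'.neg, b ∉ M := by
          intro b hb hbM
          exact hneg₀ b hb ((hMatoms b (LP.neg_mem_atoms hP hb)).mp hbM)
        exact hM' _ ⟨r', ⟨Or.inl (Or.inl (Or.inl hP)), hneg⟩, rfl⟩ hbody
      · exact hAM' hp
    have hM₀M' : M₀ ⊆ M' := hleast M' hM'mod
    rintro x ((hx | ⟨h, hh, rfl⟩) | ⟨h, hh, rfl⟩)
    · exact hM₀M' hx
    · exact hsolM' h hh
    · exact hnsolM' h hh.1 hh.2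
  exact ⟨M, ⟨hModel, hLeast⟩, hMHA, hpen⟩
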